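/- arXiv:1510.02951 — 2 statements merged into one kernel-verified Lean document; each statement's English description precedes it below -/
import Mathlib

section
/- For all positive integers r and k, the matching width of the graph CT_{r,k} is at least rk/2. -/
/-- The complete binary tree of height `r`, with nodes heap-indexed by
`Fin (2^(r+1) - 1)`: the children of node `i` are `2*i+1` and `2*i+2`. -/
def treeGraph (r : ℕ) : SimpleGraph (Fin (2 ^ (r + 1) - 1)) :=
  SimpleGraph.fromRel (fun i j => (j : ℕ) = 2 * (i : ℕ) + 1 ∨ (j : ℕ) = 2 * (i : ℕ) + 2)

/-- The graph `CT_{r,k}`: each node of the complete binary tree of height `r`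
is replaced by a clique of `k` vertices, and for each tree edge all vertices of
the two corresponding cliques are mutually adjacent. -/
def CT (r k : ℕ) : SimpleGraph (Fin (2 ^ (r + 1) - 1) × Fin k) :=
  SimpleGraph.fromRel (fun a b => a.1 = b.1 ∨ (treeGraph r).Adj a.1 b.1)

/-- `M` is a matching of `G` all of whose edges cross the cut `(A, Aᶜ)`:
every element of `M` is an edge of `G` with one end in `A` and the other
outside `A`, and no two distinct elements of `M` share a vertex. -/
def IsCutMatching {V : Type} (G : SimpleGraph V) (A : Set V) (M : Finset (Sym2 V)) : Prop :=
  (∀ e ∈ M, e ∈ G.edgeSet) ∧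
  (∀ e ∈ M, ∃ u v : V, e = s(u, v) ∧ u ∈ A ∧ v ∉ A) ∧
  (∀ e₁ ∈ M, ∀ e₂ ∈ M, e₁ ≠ e₂ → ∀ x : V, x ∈ e₁ → x ∉ e₂)

/-- The matching width of `G` is at most `w`: some ordering of the vertices
is such that, for every prefix, every matching consisting of edges between
the prefix and the rest has size at most `w`. -/
def mwLE {V : Type} [Fintype V] (G : SimpleGraph V) (w : ℕ) : Prop :=
  ∃ σ : Fin (Fintype.card V) ≃ V,
    ∀ (i : ℕ) (M : Finset (Sym2 V)),
      IsCutMatching G {v : V | ((σ.symm v : Fin (Fintype.card V)) : ℕ) < i} M →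
        M.card ≤ w

/-- The matching width of a finite graph. -/
noncomputable def mw {V : Type} [Fintype V] (G : SimpleGraph V) : ℕ :=
  sInf {w | mwLE G w}

/-!
Fix an ordering of the vertices of `CT r k`, and call a prefix balanced on a set of tree nodes if
at least `k` vertices of their cliques lie on each side of it. If the nodes span a connected part
of the tree, a balanced prefix is crossed by `k` disjoint edges among their cliques: this is
Hall's theorem with deficiency, because prefix vertices whose cliques do not cover the region
leave a boundary clique all of whose vertices after the prefix are their neighbours.

By induction, every subtree of height at least `h` has a balanced prefix crossed by `h k / 2`
disjoint edges inside it. For the step take such witnesses for three grandchildren and keep the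
one with the median prefix: the subtree minus that grandchild's subtree is connected and balanced
at this prefix (the earlier grandchild supplies `k` vertices before it, the later one `k` after
it), which adds `k` disjoint edges and hence `2` to the height. At the root this gives `r k / 2`.
-/

open Finset

theorem Finset.card_le_card_biUnion_disjSum {α β : Type*} [DecidableEq β] {A : Finset α}
    {t : α → Finset β} {d : ℕ} (hall : ∀ s ⊆ A, #s ≤ #(s.biUnion t) + d) (s : Finset A) :
    #s ≤ #(s.biUnion fun a => (t a).disjSum (univ : Finset (Fin d))) := by
  rcases s.eq_empty_or_nonempty with rfl | ⟨a₀, ha₀⟩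
  · simp
  let s' := s.map (Function.Embedding.subtype _)
  have hsub : (s'.biUnion t).disjSum (univ : Finset (Fin d)) ⊆
      s.biUnion fun a => (t a).disjSum univ := by
    rintro (b | i) hb
    · obtain ⟨a, ha, hb⟩ := mem_biUnion.1 (inl_mem_disjSum.1 hb)
      obtain ⟨a, ha', rfl⟩ := mem_map.1 ha
      exact mem_biUnion.2 ⟨a, ha', inl_mem_disjSum.2 hb⟩
    · exact mem_biUnion.2 ⟨a₀, ha₀, inr_mem_disjSum.2 (mem_univ i)⟩
  calc #s = #s' := (card_map _).symm
    _ ≤ #(s'.biUnion t) + d := hall _ fun a ha => by obtain ⟨a, -, rfl⟩ := mem_map.1 ha; exact a.2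
    _ = #((s'.biUnion t).disjSum (univ : Finset (Fin d))) := by
      rw [card_disjSum, card_univ, Fintype.card_fin]
    _ ≤ _ := card_le_card hsub

theorem Finset.exists_partial_sdr_of_card_le_card_biUnion_add {α β : Type*} [DecidableEq β]
    (A : Finset α) (t : α → Finset β) (d : ℕ)
    (hall : ∀ s ⊆ A, #s ≤ #(s.biUnion t) + d) :
    ∃ F : Finset (α × β), (∀ x ∈ F, x.1 ∈ A ∧ x.2 ∈ t x.1) ∧
      Set.InjOn Prod.fst (F : Set (α × β)) ∧ Set.InjOn Prod.snd (F : Set (α × β)) ∧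
      #A ≤ #F + d := by
  classical
  -- Hall's theorem, after adding `d` dummy representatives available to every element of `A`.
  obtain ⟨f, hf_inj, hf_mem⟩ := (all_card_le_biUnion_card_iff_exists_injective
    fun a : A => (t a).disjSum (univ : Finset (Fin d))).1 (card_le_card_biUnion_disjSum hall)
  let F := (A ×ˢ A.biUnion t).filter fun x => ∃ h : x.1 ∈ A, f ⟨x.1, h⟩ = .inl x.2
  have mem_F {x : α × β} : x ∈ F ↔ ∃ h : x.1 ∈ A, f ⟨x.1, h⟩ = .inl x.2 := by
    refine ⟨fun hx => (mem_filter.1 hx).2, fun ⟨h, hx⟩ => mem_filter.2 ⟨?_, h, hx⟩⟩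
    have := hf_mem ⟨x.1, h⟩
    rw [hx] at this
    exact mem_product.2 ⟨h, mem_biUnion.2 ⟨x.1, h, inl_mem_disjSum.1 this⟩⟩
  refine ⟨F, fun x hx => ?_, fun x hx y hy hxy => ?_, fun x hx y hy hxy => ?_, ?_⟩
  · obtain ⟨h, hx⟩ := mem_F.1 hx
    have := hf_mem ⟨x.1, h⟩
    rw [hx] at this
    exact ⟨h, inl_mem_disjSum.1 this⟩
  · obtain ⟨hx, hfx⟩ := mem_F.1 hx
    obtain ⟨hy, hfy⟩ := mem_F.1 hy
    obtain ⟨a, b⟩ := x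
    obtain ⟨a', b'⟩ := y
    obtain rfl : a = a' := hxy
    rw [show b = b' from Sum.inl_injective (hfx.symm.trans hfy)]
  · obtain ⟨hx, hfx⟩ := mem_F.1 hx
    obtain ⟨hy, hfy⟩ := mem_F.1 hy
    have := hf_inj (hfx.trans ((congrArg Sum.inl hxy).trans hfy.symm))
    exact Prod.ext (congrArg Subtype.val this) hxy
  · have hsub : univ.image f ⊆ (F.image Prod.snd).disjSum univ := by
      intro z hz
      obtain ⟨a, -, rfl⟩ := mem_image.1 hz
      cases hfa : f a with
      | inl b => exact inl_mem_disjSum.2 (mem_image.2 ⟨(a.1, b), mem_F.2 ⟨a.2, hfa⟩, rfl⟩)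
      | inr i => exact inr_mem_disjSum.2 (mem_univ i)
    calc #A = #(univ.image f) := by
          rw [card_image_of_injective _ hf_inj, card_univ, Fintype.card_coe]
      _ ≤ #(F.image Prod.snd) + d := by
        simpa [card_disjSum] using card_le_card hsub
      _ ≤ #F + d := by gcongr; exact card_image_le

theorem Finset.disjoint_sym2 {α : Type*} {s t : Finset α} (h : Disjoint s t) : Disjoint s.sym2 t.sym2 := by
  rw [Finset.disjoint_left]
  intro e hs ht
  induction e using Sym2.ind with
  | _ a b => exact Finset.disjoint_left.1 h (mk_mem_sym2_iff.1 hs).1 (mk_mem_sym2_iff.1 ht).1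

section CutMatching

variable {V : Type} {G : SimpleGraph V} {P : Set V}

theorem isCutMatching_image_pairs [DecidableEq V] {F : Finset (V × V)}
    (hF : ∀ x ∈ F, x.1 ∈ P ∧ x.2 ∉ P ∧ G.Adj x.1 x.2)
    (hfst : Set.InjOn Prod.fst (F : Set (V × V)))
    (hsnd : Set.InjOn Prod.snd (F : Set (V × V))) :
    IsCutMatching G P (F.image fun x => s(x.1, x.2)) := by
  refine ⟨?_, ?_, ?_⟩
  · rintro _ he
    obtain ⟨x, hx, rfl⟩ := mem_image.1 he
    exact (hF x hx).2.2
  · rintro _ he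
    obtain ⟨x, hx, rfl⟩ := mem_image.1 he
    exact ⟨x.1, x.2, rfl, (hF x hx).1, (hF x hx).2.1⟩
  · rintro _ he _ he' hne w hwx hwy
    obtain ⟨⟨a, b⟩, hx, rfl⟩ := mem_image.1 he
    obtain ⟨⟨a', b'⟩, hy, rfl⟩ := mem_image.1 he'
    obtain ⟨ha, hb, -⟩ := hF _ hx
    obtain ⟨ha', hb', -⟩ := hF _ hy
    rcases Sym2.mem_iff.1 hwx with rfl | rfl <;> rcases Sym2.mem_iff.1 hwy with rfl | rfl
    · exact hne (congrArg (fun x : V × V => s(x.1, x.2)) (hfst hx hy rfl))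
    · exact hb' ha
    · exact hb ha'
    · exact hne (congrArg (fun x : V × V => s(x.1, x.2)) (hsnd hx hy rfl))

theorem card_image_pairs_of_cut [DecidableEq V] {F : Finset (V × V)}
    (hF : ∀ x ∈ F, x.1 ∈ P ∧ x.2 ∉ P) : #(F.image fun x => s(x.1, x.2)) = #F := by
  refine card_image_of_injOn fun x hx y hy hxy => ?_
  rcases Sym2.eq_iff.1 hxy with ⟨h₁, h₂⟩ | ⟨h₁, -⟩
  · exact Prod.ext h₁ h₂
  · exact absurd (h₁ ▸ (hF x hx).1) (hF y hy).2

theorem IsCutMatching.union [DecidableEq V] {M₁ M₂ : Finset (Sym2 V)} {X Y : Finset V}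
    (h₁ : IsCutMatching G P M₁) (h₂ : IsCutMatching G P M₂) (hX : M₁ ⊆ X.sym2)
    (hY : M₂ ⊆ Y.sym2) (hXY : Disjoint X Y) : IsCutMatching G P (M₁ ∪ M₂) := by
  have hsep : ∀ e₁ ∈ M₁, ∀ e₂ ∈ M₂, ∀ w, w ∈ e₁ → w ∉ e₂ := fun e₁ he₁ e₂ he₂ w hw₁ hw₂ =>
    Finset.disjoint_left.1 hXY (mem_sym2_iff.1 (hX he₁) w hw₁)
      (mem_sym2_iff.1 (hY he₂) w hw₂)
  refine ⟨fun e he => ?_, fun e he => ?_, fun e₁ he₁ e₂ he₂ hne => ?_⟩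
  · rcases mem_union.1 he with he | he
    exacts [h₁.1 e he, h₂.1 e he]
  · rcases mem_union.1 he with he | he
    exacts [h₁.2.1 e he, h₂.2.1 e he]
  · rcases mem_union.1 he₁ with he₁ | he₁ <;> rcases mem_union.1 he₂ with he₂ | he₂
    · exact h₁.2.2 e₁ he₁ e₂ he₂ hne
    · exact hsep e₁ he₁ e₂ he₂
    · exact fun w hw₁ hw₂ => hsep e₂ he₂ e₁ he₁ w hw₂ hw₁
    · exact h₂.2.2 e₁ he₁ e₂ he₂ hne

end CutMatching

theorem mwLE_mw {V : Type} [Fintype V] (G : SimpleGraph V) : mwLE G (mw G) := by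
  classical
  have hne : {w | mwLE G w}.Nonempty :=
    ⟨Fintype.card (Sym2 V), (Fintype.equivFin V).symm, fun _ M _ => card_le_univ M⟩
  exact Nat.sInf_mem hne

theorem Nat.exists_eq_of_le_of_le_succ {f : ℕ → ℕ} (h₀ : f 0 = 0)
    (hstep : ∀ t, f (t + 1) ≤ f t + 1) {k T : ℕ} (hk : k ≤ f T) : ∃ t, f t = k := by
  induction T with
  | zero => exact ⟨0, by omega⟩
  | succ T ih =>
    by_cases hT : k ≤ f T
    · exact ih hT
    · exact ⟨T + 1, by have := hstep T; omega⟩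

def prefixSet {V : Type} [Fintype V] (pos : V → ℕ) (t : ℕ) : Finset V :=
  univ.filter fun v => pos v < t

theorem prefixSet_mono {V : Type} [Fintype V] (pos : V → ℕ) {t t' : ℕ} (h : t ≤ t') :
    prefixSet pos t ⊆ prefixSet pos t' := by
  intro v hv
  simp only [prefixSet, mem_filter, mem_univ, true_and] at hv ⊢
  omega

theorem exists_prefixSet_balanced {V : Type} [Fintype V] [DecidableEq V] {pos : V → ℕ}
    (hpos : Function.Injective pos) (X : Finset V) {k : ℕ} (hX : 2 * k ≤ #X) :
    ∃ t, k ≤ #(X ∩ prefixSet pos t) ∧ k ≤ #(X \ prefixSet pos t) := by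
  have h₀ : #(X ∩ prefixSet pos 0) = 0 := by simp [prefixSet]
  have hstep : ∀ t, #(X ∩ prefixSet pos (t + 1)) ≤ #(X ∩ prefixSet pos t) + 1 := by
    intro t
    have hsub : X ∩ prefixSet pos (t + 1) ⊆ X ∩ prefixSet pos t ∪ univ.filter (pos · = t) := by
      intro v hv
      simp only [prefixSet, mem_inter, mem_union, mem_filter, mem_univ, true_and] at hv ⊢
      rcases Nat.lt_succ_iff_lt_or_eq.1 hv.2 with h | h
      exacts [Or.inl ⟨hv.1, h⟩, Or.inr h]
    have hone : #(univ.filter (pos · = t)) ≤ 1 :=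
      card_le_one.2 fun a ha b hb => hpos ((mem_filter.1 ha).2.trans (mem_filter.1 hb).2.symm)
    exact (card_le_card hsub).trans ((card_union_le _ _).trans (by omega))
  have hall : #(X ∩ prefixSet pos (univ.sup pos + 1)) = #X := by
    congr 1
    refine inter_eq_left.2 fun v _ => ?_
    simpa [prefixSet, Nat.lt_succ_iff] using le_sup (f := pos) (mem_univ v)
  obtain ⟨t, ht⟩ := Nat.exists_eq_of_le_of_le_succ (f := fun t => #(X ∩ prefixSet pos t))
    h₀ hstep (k := k) (T := univ.sup pos + 1) (by rw [hall]; omega)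
  have := card_inter_add_card_sdiff X (prefixSet pos t)
  exact ⟨t, ht.ge, by omega⟩

namespace SimpleGraph

variable {α : Type} {G : SimpleGraph α} {k : ℕ}

/-- `CT r k` is the clique blow-up of `treeGraph r`. -/
def cliqueBlowup (G : SimpleGraph α) (k : ℕ) : SimpleGraph (α × Fin k) :=
  fromRel fun a b => a.1 = b.1 ∨ G.Adj a.1 b.1

theorem cliqueBlowup_adj_of_fst_eq {a b : α × Fin k} (h : a.1 = b.1) (hne : a ≠ b) :
    (G.cliqueBlowup k).Adj a b :=
  (fromRel_adj _ _ _).2 ⟨hne, Or.inl (Or.inl h)⟩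

theorem cliqueBlowup_adj_of_adj {a b : α × Fin k} (h : G.Adj a.1 b.1) :
    (G.cliqueBlowup k).Adj a b :=
  (fromRel_adj _ _ _).2 ⟨fun hab => h.ne (congrArg Prod.fst hab), Or.inl (Or.inr h)⟩

/-- Equivalent to connectivity of `G.induce R`; this is the form in which connectivity enters
Hall's condition. -/
def CrossesCuts (G : SimpleGraph α) (R : Finset α) : Prop :=
  ∀ U ⊆ R, U.Nonempty → (∃ v ∈ R, v ∉ U) → ∃ u ∈ U, ∃ v ∈ R, v ∉ U ∧ G.Adj u v

theorem crossesCuts_of_parent [LinearOrder α] {R : Finset α} {ρ : α} (p : α → α)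
    (hp : ∀ y ∈ R, y ≠ ρ → p y ∈ R ∧ p y < y ∧ G.Adj (p y) y) : G.CrossesCuts R := by
  have parent_escapes : ∀ W ⊆ R, W.Nonempty → ρ ∉ W →
      ∃ y ∈ W, p y ∈ R ∧ p y ∉ W ∧ G.Adj (p y) y := by
    intro W hWR hW hρ
    have hy := W.min'_mem hW
    obtain ⟨hpR, hlt, hadj⟩ := hp _ (hWR hy) fun h => hρ (h ▸ hy)
    exact ⟨_, hy, hpR, fun hpW => (W.min'_le _ hpW).not_gt hlt, hadj⟩
  intro U hUR hU ⟨v, hvR, hvU⟩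
  by_cases hρ : ρ ∈ U
  · obtain ⟨y, hy, hpR, hpW, hadj⟩ :=
      parent_escapes (R \ U) sdiff_subset ⟨v, mem_sdiff.2 ⟨hvR, hvU⟩⟩
        fun h => (mem_sdiff.1 h).2 hρ
    have hpU : p y ∈ U := by simpa [mem_sdiff, hpR] using hpW
    exact ⟨p y, hpU, y, (mem_sdiff.1 hy).1, (mem_sdiff.1 hy).2, hadj⟩
  · obtain ⟨y, hy, hpR, hpU, hadj⟩ := parent_escapes U hUR hU hρ
    exact ⟨y, hy, p y, hpR, hpU, hadj.symm⟩

variable [DecidableEq α]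

def IsBalanced (k : ℕ) (S : Finset α) (P : Finset (α × Fin k)) : Prop :=
  k ≤ #((S ×ˢ univ) ∩ P) ∧ k ≤ #((S ×ˢ univ) \ P)

/-- Hall's condition with deficiency `#A - k` for the vertices `A` of `R`'s cliques inside `P`,
matched into those outside `P`. -/
theorem exists_nbhd_of_crossesCuts {R : Finset α} (hR : G.CrossesCuts R)
    {P : Finset (α × Fin k)} (hbal : IsBalanced k R P) {s : Finset (α × Fin k)}
    (hs : s ⊆ (R ×ˢ univ) ∩ P) :
    ∃ N ⊆ (R ×ˢ univ) \ P, (∀ b ∈ N, ∃ a ∈ s, (G.cliqueBlowup k).Adj a b) ∧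
      #s + k ≤ #N + #((R ×ˢ univ) ∩ P) := by
  obtain ⟨hA, hB⟩ := hbal
  have hsP : ∀ a ∈ s, a ∈ P := fun a ha => (mem_inter.1 (hs ha)).2
  by_cases hcover : ∀ v ∈ R, ∃ a ∈ s, a.1 = v
  · refine ⟨(R ×ˢ univ) \ P, subset_rfl, fun b hb => ?_, by have := card_le_card hs; omega⟩
    obtain ⟨hbR, hbP⟩ := mem_sdiff.1 hb
    obtain ⟨a, ha, hab⟩ := hcover b.1 (mem_product.1 hbR).1
    exact ⟨a, ha, cliqueBlowup_adj_of_fst_eq hab fun h => hbP (h ▸ hsP a ha)⟩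
  push Not at hcover
  obtain ⟨v, hvR, hv⟩ := hcover
  rcases s.eq_empty_or_nonempty with rfl | hsne
  · exact ⟨∅, empty_subset _, by simp, by simpa using hA⟩
  -- otherwise an edge `u w` leaves the cliques met by `s`; the clique of `w` is then split
  -- between `P`, where it misses `s`, and the neighbourhood of `s`
  obtain ⟨u, hu, w, hwR, hwU, hadj⟩ := hR (s.image Prod.fst)
    (fun u hu => by
      obtain ⟨a, ha, rfl⟩ := mem_image.1 hu
      exact (mem_product.1 (mem_inter.1 (hs ha)).1).1)
    (hsne.image _)
    ⟨v, hvR, fun h => by obtain ⟨a, ha, hav⟩ := mem_image.1 h; exact hv a ha hav⟩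
  obtain ⟨a, has, rfl⟩ := mem_image.1 hu
  have hcell : ({w} ×ˢ univ : Finset (α × Fin k)) ⊆ R ×ˢ univ :=
    product_subset_product_left (singleton_subset_iff.2 hwR)
  refine ⟨({w} ×ˢ univ) \ P, sdiff_subset_sdiff hcell subset_rfl, fun b hb => ⟨a, has, ?_⟩, ?_⟩
  · have hbw : b.1 = w := mem_singleton.1 (mem_product.1 (mem_sdiff.1 hb).1).1
    exact cliqueBlowup_adj_of_adj (hbw ▸ hadj)
  have hdisj : Disjoint s (({w} ×ˢ univ) ∩ P) := by
    refine Finset.disjoint_left.2 fun b hbs hb => hwU ?_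
    rw [← mem_singleton.1 (mem_product.1 (mem_inter.1 hb).1).1]
    exact mem_image_of_mem _ hbs
  have hle : #s + #(({w} ×ˢ univ) ∩ P) ≤ #((R ×ˢ univ) ∩ P) := by
    rw [← card_union_of_disjoint hdisj]
    exact card_le_card (union_subset hs (inter_subset_inter hcell subset_rfl))
  have hsplit := card_inter_add_card_sdiff ({w} ×ˢ (univ : Finset (Fin k))) P
  simp only [card_product, card_singleton, card_univ, Fintype.card_fin, one_mul] at hsplit
  omega

theorem exists_cutMatching_of_balanced {R : Finset α} (hR : G.CrossesCuts R)
    {P : Finset (α × Fin k)} (hbal : IsBalanced k R P) :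
    ∃ M, IsCutMatching (G.cliqueBlowup k) ↑P M ∧ M ⊆ (R ×ˢ univ).sym2 ∧ k ≤ #M := by
  classical
  obtain ⟨F, hF, hfst, hsnd, hcard⟩ := exists_partial_sdr_of_card_le_card_biUnion_add
    ((R ×ˢ univ) ∩ P) (fun a => ((R ×ˢ univ) \ P).filter ((G.cliqueBlowup k).Adj a))
    (#((R ×ˢ univ) ∩ P) - k) fun s hs => by
      obtain ⟨N, hNB, hN, hcard⟩ := exists_nbhd_of_crossesCuts hR hbal hs
      have hNs : N ⊆ s.biUnion _ := fun b hb => by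
        obtain ⟨a, ha, hab⟩ := hN b hb
        exact mem_biUnion.2 ⟨a, ha, mem_filter.2 ⟨hNB hb, hab⟩⟩
      have := card_le_card hNs
      omega
  have hF' : ∀ x ∈ F, x.1 ∈ (P : Set (α × Fin k)) ∧ x.2 ∉ (P : Set (α × Fin k)) ∧
      (G.cliqueBlowup k).Adj x.1 x.2 := fun x hx => by
    obtain ⟨h₁, h₂⟩ := hF x hx
    obtain ⟨h₂, h₃⟩ := mem_filter.1 h₂
    exact ⟨(mem_inter.1 h₁).2, (mem_sdiff.1 h₂).2, h₃⟩
  refine ⟨F.image fun x => s(x.1, x.2), isCutMatching_image_pairs hF' hfst hsnd, ?_, ?_⟩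
  · intro e he
    obtain ⟨x, hx, rfl⟩ := mem_image.1 he
    obtain ⟨h₁, h₂⟩ := hF x hx
    exact mk_mem_sym2_iff.2 ⟨(mem_inter.1 h₁).1, (mem_sdiff.1 (mem_filter.1 h₂).1).1⟩
  · rw [card_image_pairs_of_cut fun x hx => ⟨(hF' x hx).1, (hF' x hx).2.1⟩]
    have := hbal.1
    omega

end SimpleGraph

namespace SimpleGraph

variable {α : Type} [DecidableEq α] {G : SimpleGraph α} {k : ℕ}

/-- The induction invariant; balance is what allows witnesses for three disjoint regions to be
combined. -/
def IsWitness (G : SimpleGraph α) (k h : ℕ) (S : Finset α) (P : Finset (α × Fin k))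
    (M : Finset (Sym2 (α × Fin k))) : Prop :=
  IsCutMatching (G.cliqueBlowup k) ↑P M ∧ M ⊆ (S ×ˢ univ).sym2 ∧ h * k ≤ 2 * #M ∧
    IsBalanced k S P

/-- The matching of `Sb` is enlarged by `k` edges inside `S \ Sb`, which is balanced at `Pb`
because `Sa` has `k` vertices before the earlier cut `Pa` and `Sc` has `k` after the later `Pc`. -/
theorem IsWitness.step {S Sa Sb Sc : Finset α} (hSa : Sa ⊆ S) (hSb : Sb ⊆ S) (hSc : Sc ⊆ S)
    (hab : Disjoint Sa Sb) (hcb : Disjoint Sc Sb) (hR : G.CrossesCuts (S \ Sb))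
    {Pa Pb Pc : Finset (α × Fin k)} (hPab : Pa ⊆ Pb) (hPbc : Pb ⊆ Pc)
    (ha : k ≤ #((Sa ×ˢ univ) ∩ Pa)) (hc : k ≤ #((Sc ×ˢ univ) \ Pc))
    {m : ℕ} {Mb : Finset (Sym2 (α × Fin k))} (hb : IsWitness G k m Sb Pb Mb) :
    ∃ M, IsWitness G k (m + 2) S Pb M := by
  obtain ⟨hMb, hMbS, hMbcard, -⟩ := hb
  have hbal : IsBalanced k (S \ Sb) Pb :=
    ⟨ha.trans (card_le_card (inter_subset_inter
        (product_subset_product_left (subset_sdiff.2 ⟨hSa, hab⟩)) hPab)),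
      hc.trans (card_le_card (sdiff_subset_sdiff
        (product_subset_product_left (subset_sdiff.2 ⟨hSc, hcb⟩)) hPbc))⟩
  obtain ⟨MR, hMR, hMRS, hMRcard⟩ := exists_cutMatching_of_balanced hR hbal
  have hdisj : Disjoint (Sb ×ˢ (univ : Finset (Fin k))) ((S \ Sb) ×ˢ univ) :=
    disjoint_product.2 (Or.inl disjoint_sdiff)
  have hSbR : (S \ Sb) ×ˢ (univ : Finset (Fin k)) ⊆ S ×ˢ univ :=
    product_subset_product_left sdiff_subset
  refine ⟨Mb ∪ MR, hMb.union hMR hMbS hMRS hdisj,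
    union_subset (hMbS.trans (sym2_mono (product_subset_product_left hSb)))
      (hMRS.trans (sym2_mono hSbR)), ?_,
    hbal.1.trans (card_le_card (inter_subset_inter hSbR subset_rfl)),
    hbal.2.trans (card_le_card (sdiff_subset_sdiff hSbR subset_rfl))⟩
  rw [card_union_of_disjoint ((Finset.disjoint_sym2 hdisj).mono hMbS hMRS)]
  have : (m + 2) * k = m * k + 2 * k := by ring
  omega

variable [Fintype α] {pos : α × Fin k → ℕ}

theorem exists_witness_of_between {S Sa Sb Sc : Finset α} (hSa : Sa ⊆ S) (hSb : Sb ⊆ S)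
    (hSc : Sc ⊆ S) (hab : Disjoint Sa Sb) (hcb : Disjoint Sc Sb) (hR : G.CrossesCuts (S \ Sb))
    {m ta tb tc : ℕ} {Ma Mb Mc : Finset (Sym2 (α × Fin k))}
    (ha : IsWitness G k m Sa (prefixSet pos ta) Ma)
    (hb : IsWitness G k m Sb (prefixSet pos tb) Mb) (hc : IsWitness G k m Sc (prefixSet pos tc) Mc)
    (hbetween : ta ≤ tb ∧ tb ≤ tc ∨ tc ≤ tb ∧ tb ≤ ta) :
    ∃ t M, IsWitness G k (m + 2) S (prefixSet pos t) M := by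
  rcases hbetween with ⟨h₁, h₂⟩ | ⟨h₁, h₂⟩
  · exact ⟨tb, hb.step hSa hSb hSc hab hcb hR (prefixSet_mono pos h₁) (prefixSet_mono pos h₂)
      ha.2.2.2.1 hc.2.2.2.2⟩
  · exact ⟨tb, hb.step hSc hSb hSa hcb hab hR (prefixSet_mono pos h₁) (prefixSet_mono pos h₂)
      hc.2.2.2.1 ha.2.2.2.2⟩

/-- Whichever of the three witnesses has the median cut is extended. -/
theorem exists_witness_of_three {S S₁ S₂ S₃ : Finset α} (h₁ : S₁ ⊆ S) (h₂ : S₂ ⊆ S)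
    (h₃ : S₃ ⊆ S) (h₁₂ : Disjoint S₁ S₂) (h₁₃ : Disjoint S₁ S₃) (h₂₃ : Disjoint S₂ S₃)
    (hR₁ : G.CrossesCuts (S \ S₁)) (hR₂ : G.CrossesCuts (S \ S₂))
    (hR₃ : G.CrossesCuts (S \ S₃)) {m : ℕ}
    (hw₁ : ∃ t M, IsWitness G k m S₁ (prefixSet pos t) M)
    (hw₂ : ∃ t M, IsWitness G k m S₂ (prefixSet pos t) M)
    (hw₃ : ∃ t M, IsWitness G k m S₃ (prefixSet pos t) M) :
    ∃ t M, IsWitness G k (m + 2) S (prefixSet pos t) M := by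
  obtain ⟨t₁, M₁, hw₁⟩ := hw₁
  obtain ⟨t₂, M₂, hw₂⟩ := hw₂
  obtain ⟨t₃, M₃, hw₃⟩ := hw₃
  rcases (by omega : (t₁ ≤ t₂ ∧ t₂ ≤ t₃ ∨ t₃ ≤ t₂ ∧ t₂ ≤ t₁) ∨
      (t₂ ≤ t₁ ∧ t₁ ≤ t₃ ∨ t₃ ≤ t₁ ∧ t₁ ≤ t₂) ∨ (t₁ ≤ t₃ ∧ t₃ ≤ t₂ ∨ t₂ ≤ t₃ ∧ t₃ ≤ t₁))
    with h | h | h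
  · exact exists_witness_of_between h₁ h₂ h₃ h₁₂ h₂₃.symm hR₂ hw₁ hw₂ hw₃ h
  · exact exists_witness_of_between h₂ h₁ h₃ h₁₂.symm h₁₃.symm hR₁ hw₂ hw₁ hw₃ h
  · exact exists_witness_of_between h₁ h₃ h₂ h₁₃ h₂₃ hR₃ hw₁ hw₃ hw₂ h

theorem exists_witness_of_two_le_card (hpos : Function.Injective pos) {S : Finset α}
    (hS : 2 ≤ #S) (hR : G.CrossesCuts S) {h : ℕ} (hh : h ≤ 2) :
    ∃ t M, IsWitness G k h S (prefixSet pos t) M := by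
  obtain ⟨t, hbal⟩ := exists_prefixSet_balanced hpos (S ×ˢ univ) (k := k) (by
    rw [card_product, card_univ, Fintype.card_fin]
    exact Nat.mul_le_mul_right k hS)
  obtain ⟨M, hM, hMS, hMcard⟩ := exists_cutMatching_of_balanced hR hbal
  exact ⟨t, M, hM, hMS, (Nat.mul_le_mul_right k hh).trans (by omega), hbal⟩

end SimpleGraph

/-- In the 1-based numbering `y + 1` of the heap, the ancestors of a node are obtained by
deleting trailing binary digits. -/
def IsHeapDescendant (x y : ℕ) : Prop :=
  ∃ m, (y + 1) / 2 ^ m = x + 1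

namespace IsHeapDescendant

theorem refl (x : ℕ) : IsHeapDescendant x x := ⟨0, by simp⟩

theorem trans {x y z : ℕ} (hxy : IsHeapDescendant x y) (hyz : IsHeapDescendant y z) :
    IsHeapDescendant x z := by
  obtain ⟨m, hm⟩ := hxy
  obtain ⟨m', hm'⟩ := hyz
  exact ⟨m' + m, by rw [pow_add, ← Nat.div_div_eq_div_mul, hm', hm]⟩

theorem of_parent {y : ℕ} (hy : y ≠ 0) : IsHeapDescendant ((y - 1) / 2) y := ⟨1, by omega⟩

theorem parent {x y : ℕ} (h : IsHeapDescendant x y) (hne : y ≠ x) :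
    y ≠ 0 ∧ IsHeapDescendant x ((y - 1) / 2) := by
  obtain ⟨_ | m, hm⟩ := h
  · exact absurd (by simpa using hm) hne
  rw [pow_succ', ← Nat.div_div_eq_div_mul] at hm
  have hy : y ≠ 0 := by rintro rfl; simp at hm
  exact ⟨hy, m, by rwa [show (y - 1) / 2 + 1 = (y + 1) / 2 by omega]⟩

theorem total {a b y : ℕ} (ha : IsHeapDescendant a y) (hb : IsHeapDescendant b y) :
    IsHeapDescendant a b ∨ IsHeapDescendant b a := by
  obtain ⟨m, hm⟩ := ha
  obtain ⟨m', hm'⟩ := hb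
  rcases le_total m m' with h | h
  · refine .inr ⟨m' - m, ?_⟩
    rw [← hm, Nat.div_div_eq_div_mul, ← pow_add, Nat.add_sub_cancel' h, hm']
  · refine .inl ⟨m - m', ?_⟩
    rw [← hm', Nat.div_div_eq_div_mul, ← pow_add, Nat.add_sub_cancel' h, hm]

theorem of_grandchild {x g : ℕ} (h₁ : 4 * x + 3 ≤ g) (h₂ : g ≤ 4 * x + 6) :
    IsHeapDescendant x g := ⟨2, by norm_num; omega⟩

theorem not_of_grandchild {x a b : ℕ} (ha : 4 * x + 3 ≤ a) (hb : b ≤ 4 * x + 6) (hab : a ≠ b) :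
    ¬ IsHeapDescendant a b := by
  rintro ⟨_ | m, hm⟩
  · exact hab (by simpa using hm.symm)
  have : (b + 1) / 2 ^ (m + 1) ≤ (b + 1) / 2 :=
    Nat.div_le_div_left (Nat.le_self_pow (by omega) 2) (by norm_num)
  omega

end IsHeapDescendant

section HeapTree

variable {n : ℕ}

def heapParent (y : Fin n) : Fin n := ⟨(y - 1) / 2, by omega⟩

open Classical in
noncomputable def subtree (x : Fin n) : Finset (Fin n) :=
  univ.filter fun y => IsHeapDescendant x y

theorem mem_subtree {x y : Fin n} : y ∈ subtree x ↔ IsHeapDescendant x y := by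
  simp [subtree]

theorem subtree_subset_subtree {x g : Fin n} (h : IsHeapDescendant x g) :
    subtree g ⊆ subtree x :=
  fun _ hy => mem_subtree.2 (h.trans (mem_subtree.1 hy))

theorem disjoint_subtree {a b : Fin n} (hab : ¬ IsHeapDescendant a b)
    (hba : ¬ IsHeapDescendant b a) : Disjoint (subtree a) (subtree b) :=
  Finset.disjoint_left.2 fun _ hya hyb =>
    (IsHeapDescendant.total (mem_subtree.1 hya) (mem_subtree.1 hyb)).elim hab hba

theorem two_le_card_subtree (x : Fin n) (hx : 2 * x + 1 < n) : 2 ≤ #(subtree x) := by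
  have hpair : {x, ⟨2 * x + 1, hx⟩} ⊆ subtree x := by
    intro y hy
    rcases mem_insert.1 hy with rfl | hy
    · exact mem_subtree.2 (.refl _)
    · exact mem_subtree.2 (mem_singleton.1 hy ▸ ⟨1, by simp; omega⟩)
  calc 2 = #({x, ⟨2 * x + 1, hx⟩} : Finset (Fin n)) :=
        (card_pair fun h => by have := congrArg Fin.val h; simp at this; omega).symm
    _ ≤ #(subtree x) := card_le_card hpair

theorem treeGraph_adj_heapParent {r : ℕ} {y : Fin (2 ^ (r + 1) - 1)} (hy : (y : ℕ) ≠ 0) :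
    (treeGraph r).Adj (heapParent y) y := by
  rw [treeGraph, SimpleGraph.fromRel_adj]
  refine ⟨fun h => ?_, .inl (by simp only [heapParent]; omega)⟩
  have := congrArg Fin.val h
  simp only [heapParent] at this
  omega

theorem crossesCuts_subtree_sdiff {r : ℕ} (x : Fin (2 ^ (r + 1) - 1))
    {D : Finset (Fin (2 ^ (r + 1) - 1))}
    (hD : ∀ y : Fin (2 ^ (r + 1) - 1), (y : ℕ) ≠ 0 → heapParent y ∈ D → y ∈ D) :
    (treeGraph r).CrossesCuts (subtree x \ D) := by
  refine SimpleGraph.crossesCuts_of_parent (ρ := x) heapParent fun y hy hyx => ?_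
  obtain ⟨hyx', hyD⟩ := mem_sdiff.1 hy
  obtain ⟨hy0, hpx⟩ := (mem_subtree.1 hyx').parent fun h => hyx (Fin.ext h)
  refine ⟨mem_sdiff.2 ⟨mem_subtree.2 hpx, fun h => hyD (hD y hy0 h)⟩, ?_,
    treeGraph_adj_heapParent hy0⟩
  simp only [Fin.lt_def, heapParent]
  omega

end HeapTree

section CompleteTree

variable {r k : ℕ} {pos : Fin (2 ^ (r + 1) - 1) × Fin k → ℕ}

theorem crossesCuts_subtree_sdiff_subtree (x g : Fin (2 ^ (r + 1) - 1)) :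
    (treeGraph r).CrossesCuts (subtree x \ subtree g) :=
  crossesCuts_subtree_sdiff x fun _ hy0 hy =>
    mem_subtree.2 ((mem_subtree.1 hy).trans (.of_parent hy0))

theorem exists_witness_subtree_of_grandchildren {m : ℕ} (x : Fin (2 ^ (r + 1) - 1))
    (hx : 4 * (x : ℕ) + 5 < 2 ^ (r + 1) - 1)
    (ih : ∀ g : Fin (2 ^ (r + 1) - 1), 4 * (x : ℕ) + 3 ≤ g → (g : ℕ) ≤ 4 * x + 5 →
      ∃ t M, (treeGraph r).IsWitness k m (subtree g) (prefixSet pos t) M) :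
    ∃ t M, (treeGraph r).IsWitness k (m + 2) (subtree x) (prefixSet pos t) M := by
  have hsub : ∀ g : Fin (2 ^ (r + 1) - 1), 4 * (x : ℕ) + 3 ≤ g → (g : ℕ) ≤ 4 * x + 5 →
      subtree g ⊆ subtree x :=
    fun g h₁ h₂ => subtree_subset_subtree (.of_grandchild h₁ (by omega))
  have hdisj : ∀ a b : Fin (2 ^ (r + 1) - 1), 4 * (x : ℕ) + 3 ≤ a → (a : ℕ) ≤ 4 * x + 5 →
      4 * (x : ℕ) + 3 ≤ b → (b : ℕ) ≤ 4 * x + 5 → (a : ℕ) ≠ b → Disjoint (subtree a) (subtree b) :=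
    fun a b ha₁ ha₂ hb₁ hb₂ hab => disjoint_subtree
      (IsHeapDescendant.not_of_grandchild ha₁ (by omega) hab)
      (IsHeapDescendant.not_of_grandchild hb₁ (by omega) hab.symm)
  let g₁ : Fin (2 ^ (r + 1) - 1) := ⟨4 * x + 3, by omega⟩
  let g₂ : Fin (2 ^ (r + 1) - 1) := ⟨4 * x + 4, by omega⟩
  let g₃ : Fin (2 ^ (r + 1) - 1) := ⟨4 * x + 5, hx⟩
  exact SimpleGraph.exists_witness_of_three
    (hsub g₁ le_rfl (by simp [g₁])) (hsub g₂ (by simp [g₂]) (by simp [g₂]))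
    (hsub g₃ (by simp [g₃]) le_rfl)
    (hdisj g₁ g₂ le_rfl (by simp [g₁]) (by simp [g₂]) (by simp [g₂]) (by simp [g₁, g₂]))
    (hdisj g₁ g₃ le_rfl (by simp [g₁]) (by simp [g₃]) le_rfl (by simp [g₁, g₃]))
    (hdisj g₂ g₃ (by simp [g₂]) (by simp [g₂]) (by simp [g₃]) le_rfl (by simp [g₂, g₃]))
    (crossesCuts_subtree_sdiff_subtree x g₁) (crossesCuts_subtree_sdiff_subtree x g₂)
    (crossesCuts_subtree_sdiff_subtree x g₃)
    (ih g₁ le_rfl (by simp [g₁])) (ih g₂ (by simp [g₂]) (by simp [g₂]))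
    (ih g₃ (by simp [g₃]) le_rfl)

/-- `(x + 2) * 2 ^ h ≤ 2 ^ (r + 1)` guarantees that the subtree of `x` has height at least `h`. -/
theorem exists_witness_subtree (hpos : Function.Injective pos) (h : ℕ) (hh : 1 ≤ h)
    (x : Fin (2 ^ (r + 1) - 1)) (hx : ((x : ℕ) + 2) * 2 ^ h ≤ 2 ^ (r + 1)) :
    ∃ t M, (treeGraph r).IsWitness k h (subtree x) (prefixSet pos t) M := by
  induction h using Nat.strong_induction_on generalizing x with
  | _ h ih =>
  by_cases hle : h ≤ 2
  · have : ((x : ℕ) + 2) * 2 ≤ (x + 2) * 2 ^ h :=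
      Nat.mul_le_mul_left _ (Nat.le_self_pow (by omega) 2)
    exact SimpleGraph.exists_witness_of_two_le_card hpos (two_le_card_subtree x (by omega))
      (by simpa using crossesCuts_subtree_sdiff x (D := ∅) (by simp)) hle
  · obtain ⟨m, rfl⟩ : ∃ m, h = m + 2 := ⟨h - 2, by omega⟩
    have h4 : ∀ c : ℕ, c ≤ 4 * (x : ℕ) + 8 → c * 2 ^ m ≤ 2 ^ (r + 1) := fun c hc =>
      calc c * 2 ^ m ≤ (4 * x + 8) * 2 ^ m := Nat.mul_le_mul_right _ hc
        _ = (x + 2) * 2 ^ (m + 2) := by ring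
        _ ≤ 2 ^ (r + 1) := hx
    have : (4 * (x : ℕ) + 8) * 2 ≤ (4 * x + 8) * 2 ^ m :=
      Nat.mul_le_mul_left _ (Nat.le_self_pow (by omega) 2)
    exact exists_witness_subtree_of_grandchildren x (by have := h4 (4 * x + 8) le_rfl; omega)
      fun g h₁ h₂ => ih m (by omega) (by omega) g (h4 (g + 2) (by omega))

end CompleteTree

theorem stmt8_general (r k : ℕ) (hr : 1 ≤ r) :
    ((r : ℝ) * (k : ℝ)) / 2 ≤ (mw (CT r k) : ℝ) := by
  obtain ⟨σ, hσ⟩ := mwLE_mw (CT r k)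
  have hroot : 0 < 2 ^ (r + 1) - 1 := by
    have := Nat.one_lt_two_pow (n := r + 1) (by omega)
    omega
  obtain ⟨t, M, hM, -, hcard, -⟩ := exists_witness_subtree (k := k)
    (Fin.val_injective.comp σ.symm.injective) r hr ⟨0, hroot⟩ (by simp [pow_succ'])
  have hM' : IsCutMatching (CT r k) _ M := hM
  have hMw : #M ≤ mw (CT r k) := hσ t M (by simpa [prefixSet] using hM')
  have hnat : r * k ≤ 2 * mw (CT r k) := by omega
  have : (r : ℝ) * k ≤ 2 * mw (CT r k) := by exact_mod_cast hnat
  linarith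

/-- For all positive integers `r` and `k`, the matching width of `CT_{r,k}`
is at least `r*k/2`. -/
theorem stmt8 (r k : ℕ) (hr : 1 ≤ r) (hk : 1 ≤ k) :
    ((r : ℝ) * (k : ℝ)) / 2 ≤ (mw (CT r k) : ℝ) :=
  stmt8_general r k hr
end

section
/- Let G = (U,V,E) be a finite bipartite graph, let Y ⊆ V, and let X ⊆ U be such that X is contained in some minimum vertex cover of G \ Y. Then X is contained in some minimum vertex cover of G. -/
/-- `C` is a vertex cover of `G`: it meets every edge. -/
def IsVC {V : Type} (G : SimpleGraph V) (C : Set V) : Prop :=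
  ∀ ⦃u v : V⦄, G.Adj u v → u ∈ C ∨ v ∈ C

/-- `C` is a minimum (smallest) vertex cover of `G`. -/
def IsMinVC {V : Type} (G : SimpleGraph V) (C : Set V) : Prop :=
  IsVC G C ∧ ∀ D : Set V, IsVC G D → C.ncard ≤ D.ncard

/-- The graph `G \ X` obtained from `G` by deleting the vertices of `X`
(kept on the same vertex type: all edges incident to `X` are removed). -/
def delVerts {V : Type} (G : SimpleGraph V) (X : Set V) : SimpleGraph V :=
  SimpleGraph.fromRel (fun u v => G.Adj u v ∧ u ∉ X ∧ v ∉ X)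

lemma delVerts_adj {V : Type} (G : SimpleGraph V) (X : Set V) {u v : V} :
    (delVerts G X).Adj u v ↔ G.Adj u v ∧ u ∉ X ∧ v ∉ X := by
  simp only [delVerts, SimpleGraph.fromRel_adj]
  constructor
  · rintro ⟨hne, h | h⟩
    · exact h
    · exact ⟨h.1.symm, h.2.2, h.2.1⟩
  · intro h
    exact ⟨h.1.ne, Or.inl h⟩

lemma exists_minVC {V : Type} [Fintype V] (G : SimpleGraph V) :
    ∃ C : Set V, IsMinVC G C := by
  set S : Set ℕ := {n | ∃ C : Set V, IsVC G C ∧ C.ncard = n} with hS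
  have hne : S.Nonempty := ⟨(Set.univ : Set V).ncard, Set.univ, fun u v _ => Or.inl trivial, rfl⟩
  obtain ⟨C, hC, hcard⟩ := Nat.sInf_mem hne
  exact ⟨C, hC, fun D hD => hcard ▸ Nat.sInf_le ⟨D, hD, rfl⟩⟩

lemma ncard_split {V : Type} [Fintype V] {U W : Set V} (hdisj : Disjoint U W)
    {S : Set V} (hS : S ⊆ U ∪ W) : S.ncard = (S ∩ U).ncard + (S ∩ W).ncard := by
  have h : S = (S ∩ U) ∪ (S ∩ W) := by
    rw [← Set.inter_union_distrib_left, Set.inter_eq_left.mpr hS]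
  calc S.ncard = ((S ∩ U) ∪ (S ∩ W)).ncard := by rw [← h]
    _ = (S ∩ U).ncard + (S ∩ W).ncard := Set.ncard_union_eq
        (Set.disjoint_of_subset Set.inter_subset_right Set.inter_subset_right hdisj)

/-- Let `G` be a finite bipartite graph with parts `U` and `W`, let `Y ⊆ W`,
and let `X ⊆ U` be contained in some minimum vertex cover of `G \ Y`.
Then `X` is contained in some minimum vertex cover of `G`. -/
theorem stmt16 {V : Type} [Fintype V] (G : SimpleGraph V) (U W : Set V)
    (hdisj : Disjoint U W)
    (hbip : ∀ ⦃a b : V⦄, G.Adj a b → (a ∈ U ∧ b ∈ W) ∨ (a ∈ W ∧ b ∈ U))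
    (Y : Set V) (hY : Y ⊆ W) (X : Set V) (hX : X ⊆ U)
    (hcov : ∃ C : Set V, IsMinVC (delVerts G Y) C ∧ X ⊆ C) :
    ∃ C : Set V, IsMinVC G C ∧ X ⊆ C := by
  obtain ⟨C, ⟨hCvc, hCmin⟩, hXC⟩ := hcov
  obtain ⟨D, hDvc, hDmin⟩ := exists_minVC G
  -- restrict to U ∪ W
  set C' : Set V := C ∩ (U ∪ W) with hC'def
  set D' : Set V := D ∩ (U ∪ W) with hD'def
  have hC'vc : IsVC (delVerts G Y) C' := by
    intro u v huv
    rw [delVerts_adj] at huv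
    have hm : u ∈ U ∪ W ∧ v ∈ U ∪ W := by
      rcases hbip huv.1 with ⟨h1, h2⟩ | ⟨h1, h2⟩
      · exact ⟨Or.inl h1, Or.inr h2⟩
      · exact ⟨Or.inr h1, Or.inl h2⟩
    rcases hCvc (by rw [delVerts_adj]; exact huv) with h | h
    · exact Or.inl ⟨h, hm.1⟩
    · exact Or.inr ⟨h, hm.2⟩
  have hD'vc : IsVC G D' := by
    intro u v huv
    have hm : u ∈ U ∪ W ∧ v ∈ U ∪ W := by
      rcases hbip huv with ⟨h1, h2⟩ | ⟨h1, h2⟩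
      · exact ⟨Or.inl h1, Or.inr h2⟩
      · exact ⟨Or.inr h1, Or.inl h2⟩
    rcases hDvc huv with h | h
    · exact Or.inl ⟨h, hm.1⟩
    · exact Or.inr ⟨h, hm.2⟩
  have hC'card : C'.ncard = C.ncard :=
    le_antisymm (Set.ncard_le_ncard Set.inter_subset_left (Set.toFinite _)) (hCmin _ hC'vc)
  have hD'card : D'.ncard = D.ncard :=
    le_antisymm (Set.ncard_le_ncard Set.inter_subset_left (Set.toFinite _)) (hDmin _ hD'vc)
  -- the exchange sets
  set F : Set V := ((C' ∪ D') ∩ U) ∪ (C' ∩ D' ∩ W) with hFdef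
  set F' : Set V := (C' ∩ D' ∩ U) ∪ ((C' ∪ D') ∩ W) with hF'def
  have hUY : ∀ u : V, u ∈ U → u ∉ Y := fun u hu hy => hdisj.ne_of_mem hu (hY hy) rfl
  -- F covers delVerts G Y
  have hFvc : IsVC (delVerts G Y) F := by
    intro u v huv
    rw [delVerts_adj] at huv
    obtain ⟨hadj, huY, hvY⟩ := huv
    have hcov2 : ∀ a b : V, G.Adj a b → a ∉ Y → b ∉ Y → a ∈ U → b ∈ W →
        a ∈ F ∨ b ∈ F := by
      intro a b hab haY hbY haU hbW
      have hCc := hCvc (by rw [delVerts_adj]; exact ⟨hab, haY, hbY⟩)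
      have hDc := hDvc hab
      rcases hCc with h | h
      · exact Or.inl (Or.inl ⟨Or.inl ⟨h, Or.inl haU⟩, haU⟩)
      rcases hDc with h' | h'
      · exact Or.inl (Or.inl ⟨Or.inr ⟨h', Or.inl haU⟩, haU⟩)
      · exact Or.inr (Or.inr ⟨⟨⟨h, Or.inr hbW⟩, ⟨h', Or.inr hbW⟩⟩, hbW⟩)
    rcases hbip hadj with ⟨h1, h2⟩ | ⟨h1, h2⟩
    · exact hcov2 u v hadj huY hvY h1 h2
    · exact (hcov2 v u hadj.symm hvY huY h2 h1).symm
  -- F' \ Y covers delVerts G Y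
  have hF'vc : IsVC (delVerts G Y) (F' \ Y) := by
    intro u v huv
    rw [delVerts_adj] at huv
    obtain ⟨hadj, huY, hvY⟩ := huv
    have hcov2 : ∀ a b : V, G.Adj a b → a ∉ Y → b ∉ Y → a ∈ U → b ∈ W →
        a ∈ F' \ Y ∨ b ∈ F' \ Y := by
      intro a b hab haY hbY haU hbW
      have hCc := hCvc (by rw [delVerts_adj]; exact ⟨hab, haY, hbY⟩)
      have hDc := hDvc hab
      rcases hCc with h | h
      · rcases hDc with h' | h'
        · exact Or.inl ⟨Or.inl ⟨⟨⟨h, Or.inl haU⟩, ⟨h', Or.inl haU⟩⟩, haU⟩, haY⟩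
        · exact Or.inr ⟨Or.inr ⟨Or.inr ⟨h', Or.inr hbW⟩, hbW⟩, hbY⟩
      · exact Or.inr ⟨Or.inr ⟨Or.inl ⟨h, Or.inr hbW⟩, hbW⟩, hbY⟩
    rcases hbip hadj with ⟨h1, h2⟩ | ⟨h1, h2⟩
    · exact hcov2 u v hadj huY hvY h1 h2
    · exact (hcov2 v u hadj.symm hvY huY h2 h1).symm
  -- cardinality bookkeeping
  have hCsub : C' ⊆ U ∪ W := Set.inter_subset_right
  have hDsub : D' ⊆ U ∪ W := Set.inter_subset_right
  have key : F.ncard + F'.ncard = C'.ncard + D'.ncard := by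
    have hFs : F.ncard = ((C' ∪ D') ∩ U).ncard + (C' ∩ D' ∩ W).ncard :=
      Set.ncard_union_eq (Set.disjoint_of_subset Set.inter_subset_right
        Set.inter_subset_right hdisj)
    have hF's : F'.ncard = (C' ∩ D' ∩ U).ncard + ((C' ∪ D') ∩ W).ncard :=
      Set.ncard_union_eq (Set.disjoint_of_subset Set.inter_subset_right
        Set.inter_subset_right hdisj)
    have hU : ((C' ∪ D') ∩ U).ncard + (C' ∩ D' ∩ U).ncard
        = (C' ∩ U).ncard + (D' ∩ U).ncard := by
      have e1 : (C' ∪ D') ∩ U = (C' ∩ U) ∪ (D' ∩ U) := Set.union_inter_distrib_right ..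
      have e2 : C' ∩ D' ∩ U = (C' ∩ U) ∩ (D' ∩ U) := by ext x; simp; tauto
      rw [e1, e2, Set.ncard_union_add_ncard_inter]
    have hW : ((C' ∪ D') ∩ W).ncard + (C' ∩ D' ∩ W).ncard
        = (C' ∩ W).ncard + (D' ∩ W).ncard := by
      have e1 : (C' ∪ D') ∩ W = (C' ∩ W) ∪ (D' ∩ W) := Set.union_inter_distrib_right ..
      have e2 : C' ∩ D' ∩ W = (C' ∩ W) ∩ (D' ∩ W) := by ext x; simp; tauto
      rw [e1, e2, Set.ncard_union_add_ncard_inter]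
    have hCs := ncard_split hdisj hCsub
    have hDs := ncard_split hdisj hDsub
    omega
  have hDYF' : D' ∩ Y ⊆ F' := fun y hy => Or.inr ⟨Or.inr hy.1, hY hy.2⟩
  have hF'low : C'.ncard + (D' ∩ Y).ncard ≤ F'.ncard := by
    have h1 : C'.ncard ≤ (F' \ Y).ncard := hC'card ▸ hCmin _ hF'vc
    have h2 : (F' \ Y) ∪ (D' ∩ Y) ⊆ F' := by
      rintro x (hx | hx)
      · exact hx.1
      · exact hDYF' hx
    have h3 : ((F' \ Y) ∪ (D' ∩ Y)).ncard = (F' \ Y).ncard + (D' ∩ Y).ncard :=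
      Set.ncard_union_eq (by
        rw [Set.disjoint_left]
        rintro x ⟨_, hx⟩ ⟨_, hy⟩
        exact hx hy)
    calc C'.ncard + (D' ∩ Y).ncard ≤ (F' \ Y).ncard + (D' ∩ Y).ncard := by omega
      _ = ((F' \ Y) ∪ (D' ∩ Y)).ncard := h3.symm
      _ ≤ F'.ncard := Set.ncard_le_ncard h2 (Set.toFinite _)
  have hFsmall : F.ncard + (D' ∩ Y).ncard ≤ D'.ncard := by omega
  -- final cover
  set F3 : Set V := F ∪ (D' ∩ Y) with hF3def
  refine ⟨F3, ⟨?_, ?_⟩, ?_⟩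
  · intro u v huv
    have hcov2 : ∀ a b : V, G.Adj a b → a ∈ U → b ∈ W → a ∈ F3 ∨ b ∈ F3 := by
      intro a b hab haU hbW
      by_cases hbY : b ∈ Y
      · rcases hDvc hab with h | h
        · exact Or.inl (Or.inl (Or.inl ⟨Or.inr ⟨h, Or.inl haU⟩, haU⟩))
        · exact Or.inr (Or.inr ⟨⟨h, Or.inr hbW⟩, hbY⟩)
      · rcases hFvc (by rw [delVerts_adj]; exact ⟨hab, hUY a haU, hbY⟩) with h | h
        · exact Or.inl (Or.inl h)
        · exact Or.inr (Or.inl h)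
    rcases hbip huv with ⟨h1, h2⟩ | ⟨h1, h2⟩
    · exact hcov2 u v huv h1 h2
    · exact (hcov2 v u huv.symm h2 h1).symm
  · intro E hE
    calc F3.ncard ≤ F.ncard + (D' ∩ Y).ncard := Set.ncard_union_le _ _
      _ ≤ D'.ncard := hFsmall
      _ = D.ncard := hD'card
      _ ≤ E.ncard := hDmin E hE
  · intro x hx
    have hxU : x ∈ U := hX hx
    exact Or.inl (Or.inl ⟨Or.inl ⟨hXC hx, Or.inl hxU⟩, hxU⟩)
end
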